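/- arXiv:2103.05938 — 2 statements merged into one kernel-verified Lean document; each statement's English description precedes it below -/
import Mathlib

section
/- Let Γ be a virtually polycyclic group. Every injective endomorphism φ: Γ → Γ has image φ(Γ) of finite index in Γ. -/
/-- A group is polycyclic if it admits a subnormal series with cyclic quotients. -/
def IsPolycyclic (G : Type*) [Group G] : Prop :=
  ∃ (n : ℕ) (s : Fin (n + 1) → Subgroup G),
    s 0 = ⊥ ∧ s (Fin.last n) = ⊤ ∧
    ∀ i : Fin n,
      s i.castSucc ≤ s i.succ ∧
      (∀ x ∈ s i.succ, ∀ y ∈ s i.castSucc, x * y * x⁻¹ ∈ s i.castSucc) ∧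
      (∃ g ∈ s i.succ, ∀ y ∈ s i.succ, ∃ k : ℤ, y * (g ^ k)⁻¹ ∈ s i.castSucc)

/-- A group is virtually polycyclic if it has a polycyclic subgroup of finite index. -/
def IsVirtuallyPolycyclic (G : Type*) [Group G] : Prop :=
  ∃ H : Subgroup G, H.FiniteIndex ∧ IsPolycyclic ↥H

/-!
If `φ(Γ)` had infinite index, then every step of the descending chain
`Γ ≥ φ(Γ) ≥ φ²(Γ) ≥ ⋯` would have infinite index, because `φᵃ` carries `Γ ≥ φ(Γ)` isomorphically
onto `φᵃ(Γ) ≥ φᵃ⁺¹(Γ)`; intersecting with a polycyclic subgroup `P` of finite index keeps this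
true. Fix a series `1 = s₀ ≤ ⋯ ≤ sₙ = P` with cyclic factors and attach to `H ≤ P` the set of
steps `i` at which `H` meets `sᵢ₊₁` in a subgroup whose image in `sᵢ₊₁ / sᵢ` has finite index.
This set grows with `H`, and since a subgroup of a cyclic group is trivial or of finite index,
`H ≤ K` with equal sets forces `[K : H] < ∞`, by induction along the series. So the sets attached
to the chain would strictly decrease forever inside the finite set `Fin n`.
-/

open scoped Pointwise

namespace Subgroup

variable {G : Type*} [Group G]

theorem relIndex_sup_eq_of_coe_sup_eq_mul {H M : Subgroup G}
    (h : ((M ⊔ H : Subgroup G) : Set G) = M * H) : H.relIndex (M ⊔ H) = H.relIndex M := by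
  let e := quotientSubgroupOfEmbeddingOfLE H (le_sup_left : M ≤ M ⊔ H)
  refine (Nat.card_congr (Equiv.ofBijective e ⟨e.injective, ?_⟩)).symm
  intro q
  induction q using QuotientGroup.induction_on with | H x => ?_
  obtain ⟨m, hm, k, hk, hx⟩ : (x : G) ∈ (M : Set G) * H := h ▸ x.2
  refine ⟨QuotientGroup.mk ⟨m, hm⟩, ?_⟩
  rw [quotientSubgroupOfEmbeddingOfLE_apply_mk, QuotientGroup.eq, mem_subgroupOf]
  simpa [← hx] using hk

theorem inf_relIndex_of_le {H B Y : Subgroup G} (hY : Y ≤ B) :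
    (H ⊓ B).relIndex Y = H.relIndex Y := by
  rw [← relIndex_inf_mul_relIndex, inf_eq_right.mpr hY, relIndex_eq_one.mpr hY, mul_one]

theorem relIndex_ne_zero_of_inf_of_sup {H K N : Subgroup G} (hHK : H ≤ K)
    (hK : K ≤ normalizer (N : Set G))
    (hinf : H.relIndex (K ⊓ N) ≠ 0) (hsup : (H ⊔ N).relIndex (K ⊔ N) ≠ 0) :
    H.relIndex K ≠ 0 := by
  have hH : H ≤ normalizer ((K ⊓ N : Subgroup G) : Set G) :=
    (le_inf (hHK.trans K.le_normalizer) (hHK.trans hK)).trans inf_normalizer_le_normalizer_inf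
  have hdedekind : (H ⊔ N) ⊓ K ≤ (K ⊓ N) ⊔ H := by
    rintro x ⟨hxHN, hxK⟩
    obtain ⟨h, hh, n, hn, rfl⟩ : x ∈ (H : Set G) * N :=
      coe_mul_of_left_le_normalizer_right H N (hHK.trans hK) ▸ hxHN
    have hnK : n ∈ K := by simpa using mul_mem (inv_mem (hHK hh)) hxK
    exact mul_mem (mem_sup_right hh) (mem_sup_left ⟨hnK, hn⟩)
  have hlower : H.relIndex ((K ⊓ N) ⊔ H) ≠ 0 := by
    rwa [relIndex_sup_eq_of_coe_sup_eq_mul (coe_mul_of_right_le_normalizer_left _ _ hH)]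
  have hupper : ((K ⊓ N) ⊔ H).relIndex K ≠ 0 := by
    have : ((H ⊔ N) ⊓ K).relIndex K ≠ 0 := by
      rw [inf_relIndex_right]
      exact mt (relIndex_eq_zero_of_le_right le_sup_left) hsup
    exact mt (relIndex_eq_zero_of_le_left hdedekind) this
  exact relIndex_ne_zero_trans hlower hupper

theorem relIndex_zpowers_zpow_ne_zero (g : G) {k : ℤ} (hk : k ≠ 0) :
    (zpowers (g ^ k)).relIndex (zpowers g) ≠ 0 := by
  have hle : AddSubgroup.toSubgroup (AddSubgroup.zmultiples k) ≤
      (zpowers (g ^ k)).comap (zpowersHom G g) := by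
    rintro x ⟨m, hm⟩
    rw [mem_comap, zpowersHom_apply, ← hm]
    exact ⟨m, by simp [zpow_mul, mul_comm]⟩
  have hidx : (AddSubgroup.toSubgroup (AddSubgroup.zmultiples k)).index ≠ 0 := by
    rwa [AddSubgroup.index_toSubgroup, Int.index_zmultiples, Int.natAbs_ne_zero]
  rw [← range_zpowersHom g, MonoidHom.range_eq_map, ← relIndex_comap, relIndex_top_right]
  exact fun h => hidx (Nat.eq_zero_of_zero_dvd (h ▸ index_dvd_of_le hle))

def IsCyclicStep (A B : Subgroup G) : Prop :=
  A ≤ B ∧ (∀ x ∈ B, ∀ y ∈ A, x * y * x⁻¹ ∈ A) ∧ ∃ g ∈ B, ∀ y ∈ B, ∃ k : ℤ, y * (g ^ k)⁻¹ ∈ A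

namespace IsCyclicStep

variable {A B : Subgroup G}

theorem le_normalizer (h : IsCyclicStep A B) : B ≤ normalizer (A : Set G) :=
  (normal_subgroupOf_iff_le_normalizer h.1).mp
    ((normal_subgroupOf_iff h.1).mpr fun _ _ ha hb => h.2.1 _ hb _ ha)

theorem eq_or_relIndex_ne_zero (h : IsCyclicStep A B) {K : Subgroup G} (hAK : A ≤ K)
    (hKB : K ≤ B) : K = A ∨ K.relIndex B ≠ 0 := by
  obtain ⟨g, hgB, hgen⟩ := h.2.2
  by_cases hKA : K ≤ A
  · exact Or.inl (le_antisymm hKA hAK)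
  right
  obtain ⟨y, hyK, hyA⟩ := SetLike.not_le_iff_exists.mp hKA
  obtain ⟨k, hk⟩ := hgen y (hKB hyK)
  have hk0 : k ≠ 0 := by
    rintro rfl
    exact hyA (by simpa using hk)
  have hgk : g ^ k ∈ K := by simpa using mul_mem (inv_mem (hAK hk)) hyK
  set X := A ⊔ zpowers (g ^ k)
  have hXK : X ≤ K := sup_le hAK (zpowers_le.mpr hgk)
  have hgX : zpowers g ≤ normalizer (X : Set G) := by
    have hgnorm : g ∈ normalizer (zpowers (g ^ k) : Set G) := by
      rw [mem_normalizer_iff_map_conj_eq, MonoidHom.map_zpowers]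
      simp [(Commute.self_zpow g k).eq]
    exact zpowers_le.mpr
      (normalizer_inf_normalizer_le_normalizer_sup _ _ ⟨h.le_normalizer hgB, hgnorm⟩)
  have hBX : B ≤ zpowers g ⊔ X := by
    intro y hy
    obtain ⟨m, hm⟩ := hgen y hy
    simpa using mul_mem (mem_sup_right (mem_sup_left hm) : _ ∈ zpowers g ⊔ X)
      (mem_sup_left (zpow_mem_zpowers g m))
  have hXg : X.relIndex (zpowers g) ≠ 0 :=
    mt (relIndex_eq_zero_of_le_left le_sup_right) (relIndex_zpowers_zpow_ne_zero g hk0)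
  rw [← relIndex_sup_eq_of_coe_sup_eq_mul (coe_mul_of_left_le_normalizer_right _ _ hgX)] at hXg
  exact mt (relIndex_eq_zero_of_le_left hXK) (mt (relIndex_eq_zero_of_le_right hBX) hXg)

end IsCyclicStep

def finiteIndexSteps {n : ℕ} (s : Fin (n + 1) → Subgroup G) (H : Subgroup G) : Set (Fin n) :=
  {i | ((H ⊓ s i.succ) ⊔ s i.castSucc).relIndex (s i.succ) ≠ 0}

theorem finiteIndexSteps_mono {n : ℕ} (s : Fin (n + 1) → Subgroup G) :
    Monotone (finiteIndexSteps s) := fun _ _ hHK _ hi =>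
  mt (relIndex_eq_zero_of_le_left (sup_le_sup_right (inf_le_inf_right _ hHK) _)) hi

theorem relIndex_inf_ne_zero_of_finiteIndexSteps_subset {n : ℕ} {s : Fin (n + 1) → Subgroup G}
    (hs0 : s 0 = ⊥) (hs : ∀ i : Fin n, IsCyclicStep (s i.castSucc) (s i.succ))
    {H K : Subgroup G} (hHK : H ≤ K) (hsub : finiteIndexSteps s K ⊆ finiteIndexSteps s H)
    (j : Fin (n + 1)) : H.relIndex (K ⊓ s j) ≠ 0 := by
  induction j using Fin.induction with
  | zero => simp [hs0]
  | succ i ih =>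
    set A := s i.castSucc
    set B := s i.succ
    have hstep : ((H ⊓ B) ⊔ A).relIndex ((K ⊓ B) ⊔ A) ≠ 0 := by
      have hKB : (K ⊓ B) ⊔ A ≤ B := sup_le inf_le_right (hs i).1
      rcases (hs i).eq_or_relIndex_ne_zero le_sup_right hKB with hK | hK
      · have hH : (H ⊓ B) ⊔ A = A :=
          le_antisymm ((sup_le_sup_right (inf_le_inf_right B hHK) A).trans hK.le) le_sup_right
        rw [hK, hH, relIndex_self]
        exact one_ne_zero
      · exact mt (relIndex_eq_zero_of_le_right hKB) (hsub hK)
    have hinf : (H ⊓ B).relIndex (K ⊓ B ⊓ A) ≠ 0 := by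
      rwa [inf_assoc, inf_eq_right.mpr (hs i).1, inf_relIndex_of_le (inf_le_right.trans (hs i).1)]
    rw [← inf_relIndex_of_le inf_le_right]
    exact relIndex_ne_zero_of_inf_of_sup (inf_le_inf_right B hHK)
      (inf_le_right.trans (hs i).le_normalizer) hinf hstep

end Subgroup

open Subgroup

theorem IsPolycyclic.exists_relIndex_ne_zero {G : Type*} [Group G] (hG : IsPolycyclic G)
    (H : ℕ → Subgroup G) (hH : Antitone H) : ∃ a, (H (a + 1)).relIndex (H a) ≠ 0 := by
  obtain ⟨n, s, hs0, hstop, hs⟩ := hG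
  obtain ⟨a, ha⟩ := WellFounded.not_rel_apply_succ (r := fun x y : Set (Fin n) => x < y)
    (finiteIndexSteps s ∘ H)
  have hsteps := eq_of_le_of_not_lt (finiteIndexSteps_mono s (hH a.le_succ)) ha
  refine ⟨a, ?_⟩
  simpa [hstop] using relIndex_inf_ne_zero_of_finiteIndexSteps_subset hs0 hs (hH a.le_succ)
    hsteps.ge (Fin.last n)

theorem IsVirtuallyPolycyclic.exists_relIndex_ne_zero {G : Type*} [Group G]
    (hG : IsVirtuallyPolycyclic G) (H : ℕ → Subgroup G) (hH : Antitone H) :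
    ∃ a, (H (a + 1)).relIndex (H a) ≠ 0 := by
  obtain ⟨P, hP, hPc⟩ := hG
  obtain ⟨a, ha⟩ := hPc.exists_relIndex_ne_zero (fun a => (H a).subgroupOf P)
    fun a b hab => comap_mono (hH hab)
  rw [subgroupOf, relIndex_comap, subgroupOf_map_subtype] at ha
  have hPH : (H a ⊓ P).relIndex (H a) ≠ 0 := by
    rw [inf_relIndex_left]
    exact isFiniteRelIndex_of_finiteIndex.relIndex_ne_zero
  exact ⟨a, relIndex_ne_zero_trans ha hPH⟩

namespace Monoid.End

variable {G : Type*} [Group G] (φ : Monoid.End G)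

theorem range_pow_succ (a : ℕ) :
    MonoidHom.range (φ ^ (a + 1) : G →* G) = (MonoidHom.range (φ : G →* G)).map (φ ^ a) := by
  rw [pow_succ]
  exact MonoidHom.range_comp _ _

theorem antitone_range_pow : Antitone fun a : ℕ => MonoidHom.range (φ ^ a : G →* G) :=
  antitone_nat_of_succ_le fun a => (range_pow_succ φ a).trans_le (map_le_range _ _)

theorem relIndex_range_pow_succ {φ : Monoid.End G} (hφ : Function.Injective φ) (a : ℕ) :
    (MonoidHom.range (φ ^ (a + 1) : G →* G)).relIndex (MonoidHom.range (φ ^ a : G →* G)) =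
      (MonoidHom.range (φ : G →* G)).index := by
  have hφa : Function.Injective (φ ^ a) := by
    rw [coe_pow]
    exact hφ.iterate a
  rw [range_pow_succ, MonoidHom.range_eq_map (φ ^ a : G →* G),
    relIndex_map_map_of_injective _ _ hφa, relIndex_top_right]

end Monoid.End

theorem stmt8 {Γ : Type*} [Group Γ] (h : IsVirtuallyPolycyclic Γ)
    (φ : Monoid.End Γ) (hinj : Function.Injective φ) :
    (MonoidHom.range (φ : Γ →* Γ)).FiniteIndex := by
  obtain ⟨a, ha⟩ := h.exists_relIndex_ne_zero _ φ.antitone_range_pow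
  rw [Monoid.End.relIndex_range_pow_succ hinj] at ha
  exact ⟨ha⟩
end

section
/- Let N be a finitely generated torsion-free nilpotent group and φ: N → N an injective endomorphism that is expanding, meaning that on each quotient √γᵢ(N)/√γᵢ₊₁(N) ≅ ℤ^{mᵢ} of isolators of the lower central series, the induced endomorphism has all eigenvalues of absolute value strictly greater than 1. Then ⋂_{n>0} φⁿ(N) is the trivial subgroup. -/
/-- The isolator of a subgroup: the subgroup generated by all elements having a positive
power inside the subgroup (in a nilpotent group this set is already a subgroup). -/
def isolator {N : Type*} [Group N] (H : Subgroup N) : Subgroup N :=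
  Subgroup.closure {x : N | ∃ m : ℕ, 0 < m ∧ x ^ m ∈ H}

/-- Torsion-free monoid (the definition `Monoid.IsTorsionFree` of the older Mathlib,
which has since been removed). -/
def Monoid.IsTorsionFree (G : Type*) [Monoid G] : Prop :=
  ∀ g : G, g ≠ 1 → ¬IsOfFinOrder g

/-!
By induction on `i`, `⋂ₙ φⁿ⁺¹(N)` lies in every `√γᵢ`; and `√γ_c = √1 = 1` for a torsion-free
group of class `c`.

First, `φ⁻¹(√γᵢ) ⊆ √γᵢ`, again by induction: on each layer `φ` acts by an integer matrix of
nonzero determinant, so it cannot push an element out of that layer into the next one. Now let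
`x ∈ √γᵢ` with `x = φⁿ⁺¹(yₙ)` for every `n`. Then `yₙ ∈ √γᵢ`, and the class `w ∈ ℤ^{mᵢ}` of `x`
is `Aⁿ⁺¹ vₙ`, where `vₙ` is the class of `yₙ`. So `vₙ = A⁻⁽ⁿ⁺¹⁾ w`. By Gelfand's formula `A⁻¹` has
spectral radius `< 1`, so `vₙ → 0`. Integer vectors tending to `0` are eventually `0`, so
`w = 0` and `x ∈ √γᵢ₊₁`.
-/

open Filter Topology Matrix

theorem Set.mem_of_iterate_mem {α : Type*} {f : α → α} {s : Set α} (h : f ⁻¹' s ⊆ s) (k : ℕ)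
    {y : α} (hk : f^[k] y ∈ s) : y ∈ s :=
  have hcompl : Set.MapsTo f sᶜ sᶜ := fun _ hy hfy => hy (h hfy)
  not_not.mp fun hy => hcompl.iterate k hy hk

theorem Int.eventually_eq_zero_of_tendsto_cast_nhds_zero {α : Type*} {l : Filter α} {f : α → ℤ}
    (h : Tendsto (fun a => (f a : ℂ)) l (𝓝 0)) : ∀ᶠ a in l, f a = 0 := by
  filter_upwards [h.norm.eventually_lt_const (by norm_num : ‖(0 : ℂ)‖ < 1)] with a ha
  rw [Complex.norm_intCast] at ha
  exact_mod_cast Int.abs_lt_one_iff.mp (by exact_mod_cast ha)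

section BanachAlgebra

variable {A : Type*} [NormedRing A] [NormedAlgebra ℂ A] [CompleteSpace A]

theorem spectrum.tendsto_pow_atTop_nhds_zero_of_spectralRadius_lt_one {a : A}
    (h : spectralRadius ℂ a < 1) : Tendsto (a ^ ·) atTop (𝓝 0) := by
  obtain ⟨r, hρr, hr1⟩ := ENNReal.lt_iff_exists_nnreal_btwn.mp h
  have hbound : ∀ᶠ n : ℕ in atTop, ‖a ^ n‖₊ ≤ r ^ n := by
    filter_upwards [(pow_nnnorm_pow_one_div_tendsto_nhds_spectralRadius a).eventually_lt_const hρr,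
      eventually_gt_atTop 0] with n hn hn0
    rw [one_div, ENNReal.rpow_inv_lt_iff (by positivity), ENNReal.rpow_natCast] at hn
    exact_mod_cast hn.le
  refine squeeze_zero_norm' (hbound.mono fun n hn => ?_)
    (tendsto_pow_atTop_nhds_zero_of_lt_one r.2 (by exact_mod_cast hr1))
  exact_mod_cast hn

theorem spectrum.spectralRadius_inv_lt_one [Nontrivial A] (u : Aˣ)
    (hu : ∀ μ ∈ spectrum ℂ (u : A), 1 < ‖μ‖) : spectralRadius ℂ (↑u⁻¹ : A) < 1 := by
  refine spectrum.spectralRadius_lt_of_forall_lt _ fun z hz => ?_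
  rw [← spectrum.map_inv, Set.mem_inv] at hz
  have hz_ne : z ≠ 0 := by
    rintro rfl
    simp at hz
  have := hu _ hz
  rw [norm_inv, one_lt_inv₀ (norm_pos_iff.mpr hz_ne)] at this
  exact_mod_cast this

end BanachAlgebra

namespace Matrix

variable {ι : Type*} [Fintype ι] [DecidableEq ι]

def IsExpanding (A : Matrix ι ι ℤ) : Prop :=
  ∀ μ ∈ spectrum ℂ (A.map (Int.cast : ℤ → ℂ)), 1 < ‖μ‖

namespace IsExpanding

variable {A : Matrix ι ι ℤ}

theorem isUnit_map (hA : A.IsExpanding) : IsUnit (A.map (Int.cast : ℤ → ℂ)) :=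
  spectrum.isUnit_of_zero_notMem ℂ fun h => absurd (hA 0 h) (by norm_num)

theorem mulVec_injective (hA : A.IsExpanding) : Function.Injective A.mulVec := by
  refine mulVec_injective_of_det_ne_zero fun h => ?_
  have hdet := (isUnit_iff_isUnit_det _).mp hA.isUnit_map
  rw [show (A.map (Int.cast : ℤ → ℂ)).det = A.det from ((Int.castRingHom ℂ).map_det A).symm, h,
    Int.cast_zero] at hdet
  exact not_isUnit_zero hdet

attribute [local instance] Matrix.linftyOpNormedRing Matrix.linftyOpNormedAlgebra in
theorem eq_zero_of_forall_eq_pow_succ_mulVec (hA : A.IsExpanding) {w : ι → ℤ}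
    (hw : ∀ n, ∃ v, w = (A ^ (n + 1)) *ᵥ v) : w = 0 := by
  rcases isEmpty_or_nonempty ι with hι | hι
  · exact Subsingleton.elim _ _
  set u := hA.isUnit_map.unit
  choose v hv using hw
  have hw_cast : ∀ n, (Int.cast ∘ w : ι → ℂ) = (↑u ^ (n + 1) : Matrix ι ι ℂ) *ᵥ (Int.cast ∘ v n) :=
    fun n => funext fun i => by
      rw [Function.comp_apply, hv n]
      exact ((Int.castRingHom ℂ).map_mulVec _ _ i).trans (by rw [Matrix.map_pow]; rfl)
  have hv_cast :
      ∀ n, (Int.cast ∘ v n : ι → ℂ) = (↑u⁻¹ ^ (n + 1) : Matrix ι ι ℂ) *ᵥ (Int.cast ∘ w) :=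
    fun n => by
      rw [hw_cast n, mulVec_mulVec, ← Units.val_pow_eq_pow_val, ← Units.val_pow_eq_pow_val,
        ← Units.val_mul, inv_pow, inv_mul_cancel, Units.val_one, one_mulVec]
  have hlim : Tendsto (fun n => (Int.cast ∘ v n : ι → ℂ)) atTop (𝓝 0) := by
    have hpow := (spectrum.tendsto_pow_atTop_nhds_zero_of_spectralRadius_lt_one
      (spectrum.spectralRadius_inv_lt_one u (by rw [IsUnit.unit_spec]; exact hA))).comp
      (tendsto_add_atTop_nat 1)
    simp_rw [hv_cast]
    exact ((continuous_id.matrix_mulVec continuous_const).tendsto' _ _ (zero_mulVec _)).comp hpow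
  obtain ⟨n, hn⟩ := (eventually_all.mpr fun i =>
    Int.eventually_eq_zero_of_tendsto_cast_nhds_zero (tendsto_pi_nhds.mp hlim i)).exists
  rw [hv n, show v n = 0 from funext hn, mulVec_zero]

end IsExpanding

end Matrix

section Isolator

variable {N : Type*} [Group N]

theorem le_isolator (H : Subgroup N) : H ≤ isolator H :=
  fun _ hx => Subgroup.subset_closure ⟨1, one_pos, by rwa [pow_one]⟩

theorem isolator_mono {H K : Subgroup N} (h : H ≤ K) : isolator H ≤ isolator K :=
  Subgroup.closure_mono fun _ ⟨m, hm, hx⟩ => ⟨m, hm, h hx⟩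

theorem isolator_top : isolator (⊤ : Subgroup N) = ⊤ :=
  top_le_iff.mp (le_isolator ⊤)

theorem isolator_bot (htf : Monoid.IsTorsionFree N) : isolator (⊥ : Subgroup N) = ⊥ := by
  refine le_bot_iff.mp ((Subgroup.closure_le _).mpr ?_)
  rintro x ⟨m, hm, hxm⟩
  by_contra hx
  exact htf x hx (isOfFinOrder_iff_pow_eq_one.mpr ⟨m, hm, Subgroup.mem_bot.mp hxm⟩)

end Isolator

namespace Monoid.End

variable {N : Type*} [Group N] {φ : Monoid.End N}

/-- `π` embeds `S ⧸ T` into `ℤᵐ`, and there `φ` acts by the expanding matrix `A`. -/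
def IsExpandingOn (φ : Monoid.End N) (S T : Subgroup N) : Prop :=
  ∃ (m : ℕ) (π : S →* Multiplicative (Fin m → ℤ)) (A : Matrix (Fin m) (Fin m) ℤ),
    (∀ x : S, π x = 1 ↔ (x : N) ∈ T) ∧ A.IsExpanding ∧
    ∀ (x : S) (hx : φ x ∈ S), (π ⟨φ x, hx⟩).toAdd = A *ᵥ (π x).toAdd

theorem IsExpandingOn.mem_of_map_mem {S T : Subgroup N} (h : φ.IsExpandingOn S T) (hTS : T ≤ S)
    {y : N} (hy : y ∈ S) (hφy : φ y ∈ T) : y ∈ T := by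
  obtain ⟨m, π, A, hker, hA, hcompat⟩ := h
  have hAπy : A *ᵥ (π ⟨y, hy⟩).toAdd = A *ᵥ 0 := by
    rw [← hcompat _ (hTS hφy), mulVec_zero, toAdd_eq_zero, hker]
    exact hφy
  exact (hker _).mp (toAdd_eq_zero.mp (hA.mulVec_injective hAπy))

theorem preimage_subset_of_isExpandingOn {S : ℕ → Subgroup N} (hS : Antitone S) (h0 : S 0 = ⊤)
    (h : ∀ i, φ.IsExpandingOn (S i) (S (i + 1))) (i : ℕ) : ⇑φ ⁻¹' (S i : Set N) ⊆ S i := by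
  induction i with
  | zero => simp [h0]
  | succ i ih =>
    exact fun y hy => (h i).mem_of_map_mem (hS i.le_succ) (ih (hS i.le_succ hy)) hy

theorem toAdd_iterate {S : Subgroup N} (hpre : ⇑φ ⁻¹' (S : Set N) ⊆ S) {m : ℕ}
    (π : S →* Multiplicative (Fin m → ℤ)) (A : Matrix (Fin m) (Fin m) ℤ)
    (hcompat : ∀ (x : S) (hx : φ x ∈ S), (π ⟨φ x, hx⟩).toAdd = A *ᵥ (π x).toAdd)
    (k : ℕ) (y : S) (hk : φ^[k] y ∈ S) : (π ⟨φ^[k] y, hk⟩).toAdd = (A ^ k) *ᵥ (π y).toAdd := by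
  induction k generalizing y with
  | zero => simp
  | succ k ih =>
    have hφy : φ y ∈ S := Set.mem_of_iterate_mem hpre k hk
    rw [pow_succ, ← mulVec_mulVec, ← hcompat y hφy, ← ih ⟨φ y, hφy⟩ hk]
    rfl

theorem IsExpandingOn.mem_of_forall_mem_range_iterate {S T : Subgroup N}
    (h : φ.IsExpandingOn S T) (hpre : ⇑φ ⁻¹' (S : Set N) ⊆ S) {x : N} (hx : x ∈ S)
    (hrange : ∀ n, x ∈ Set.range φ^[n + 1]) : x ∈ T := by
  obtain ⟨m, π, A, hker, hA, hcompat⟩ := h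
  suffices (π ⟨x, hx⟩).toAdd = 0 from (hker _).mp (toAdd_eq_zero.mp this)
  refine hA.eq_zero_of_forall_eq_pow_succ_mulVec fun n => ?_
  obtain ⟨y, rfl⟩ := hrange n
  have hy : y ∈ S := Set.mem_of_iterate_mem hpre (n + 1) hx
  exact ⟨_, toAdd_iterate hpre π A hcompat (n + 1) ⟨y, hy⟩ hx⟩

theorem iInf_range_pow_le_of_isExpandingOn {S : ℕ → Subgroup N} (hS : Antitone S)
    (h0 : S 0 = ⊤) (h : ∀ i, φ.IsExpandingOn (S i) (S (i + 1))) (i : ℕ) :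
    (⨅ n : ℕ, MonoidHom.range ((φ ^ (n + 1) : Monoid.End N) : N →* N)) ≤ S i := by
  induction i with
  | zero => simp [h0]
  | succ i ih =>
    intro x hx
    exact (h i).mem_of_forall_mem_range_iterate (preimage_subset_of_isExpandingOn hS h0 h i)
      (ih hx) fun n => Subgroup.mem_iInf.mp hx n

end Monoid.End

theorem stmt14_general {N : Type*} [Group N] [Group.IsNilpotent N]
    (htf : Monoid.IsTorsionFree N)
    (φ : Monoid.End N)
    (hexp : ∀ i : ℕ, ∃ (m : ℕ)
      (π : ↥(isolator ((⊤ : Subgroup N).lowerCentralSeries i)) →* Multiplicative (Fin m → ℤ))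
      (A : Matrix (Fin m) (Fin m) ℤ),
      Function.Surjective π ∧
      (∀ x : ↥(isolator ((⊤ : Subgroup N).lowerCentralSeries i)),
        π x = 1 ↔ (x : N) ∈ isolator ((⊤ : Subgroup N).lowerCentralSeries (i + 1))) ∧
      (∀ μ ∈ spectrum ℂ (A.map (Int.cast : ℤ → ℂ)), 1 < ‖μ‖) ∧
      (∀ (x : ↥(isolator ((⊤ : Subgroup N).lowerCentralSeries i)))
        (hx : φ (x : N) ∈ isolator ((⊤ : Subgroup N).lowerCentralSeries i)),
        Multiplicative.toAdd (π ⟨φ (x : N), hx⟩) =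
          A.mulVec (Multiplicative.toAdd (π x)))) :
    (⨅ n : ℕ, MonoidHom.range ((φ ^ (n + 1) : Monoid.End N) : N →* N)) = ⊥ := by
  obtain ⟨c, hc⟩ := Subgroup.nilpotent_iff_lowerCentralSeries.mp ‹Group.IsNilpotent N›
  have hanti : Antitone fun i => isolator ((⊤ : Subgroup N).lowerCentralSeries i) :=
    fun _ _ hij => isolator_mono (Subgroup.lowerCentralSeries_antitone _ hij)
  have hexpOn (i : ℕ) : φ.IsExpandingOn (isolator ((⊤ : Subgroup N).lowerCentralSeries i))
      (isolator ((⊤ : Subgroup N).lowerCentralSeries (i + 1))) :=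
    let ⟨m, π, A, _, hker, hA, hcompat⟩ := hexp i
    ⟨m, π, A, hker, hA, hcompat⟩
  have hle := φ.iInf_range_pow_le_of_isExpandingOn hanti (by simp [isolator_top]) hexpOn c
  rwa [hc, isolator_bot htf, le_bot_iff] at hle

theorem stmt14 {N : Type*} [Group N] [Group.FG N] [Group.IsNilpotent N]
    (htf : Monoid.IsTorsionFree N)
    (φ : Monoid.End N) (hinj : Function.Injective φ)
    (hexp : ∀ i : ℕ, ∃ (m : ℕ)
      (π : ↥(isolator ((⊤ : Subgroup N).lowerCentralSeries i)) →* Multiplicative (Fin m → ℤ))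
      (A : Matrix (Fin m) (Fin m) ℤ),
      Function.Surjective π ∧
      (∀ x : ↥(isolator ((⊤ : Subgroup N).lowerCentralSeries i)),
        π x = 1 ↔ (x : N) ∈ isolator ((⊤ : Subgroup N).lowerCentralSeries (i + 1))) ∧
      (∀ μ ∈ spectrum ℂ (A.map (Int.cast : ℤ → ℂ)), 1 < ‖μ‖) ∧
      (∀ (x : ↥(isolator ((⊤ : Subgroup N).lowerCentralSeries i)))
        (hx : φ (x : N) ∈ isolator ((⊤ : Subgroup N).lowerCentralSeries i)),
        Multiplicative.toAdd (π ⟨φ (x : N), hx⟩) =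
          A.mulVec (Multiplicative.toAdd (π x)))) :
    (⨅ n : ℕ, MonoidHom.range ((φ ^ (n + 1) : Monoid.End N) : N →* N)) = ⊥ :=
  stmt14_general htf φ hexp
end
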